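/- Coset-averaged calibration: let W ⊆ F_2^m be a k-dimensional linear subspace and write [u] = u + W. Under the hypotheses of the main calibration theorem (E(a+b|ρ) ≠ 0 for all b), E(a;P_{[u]}) P([u]) = 2^{k-m} Σ_{b ∈ W^⊥, [x] ∈ F_2^m/W} (-1)^{(u+x)·b} E(a|ρ_{[x]}) p̃([x]|ρ) / E(a+b|ρ), where P([u]) = Σ_{w∈W} P(u+w), p̃([x]|ρ) = Σ_{w∈W} p̃(x+w|ρ), and E(a|ρ_{[x]}) p̃([x]|ρ) = Σ_{w∈W} E(a|ρ_{x+w}) p̃(x+w|ρ). In particular, for W = F_2^m: E(a; P_{F_2^m}) = Ẽ-averaged post-measurement expectation divided by E(a|ρ). -/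

import Mathlib

open Finset Matrix

def dotp {m : ℕ} (a x : Fin m → ZMod 2) : ZMod 2 := ∑ i, a i * x i

/-- Syndrome projection `π_x = Π_i (Id + (-1)^{x_i} S_i)/2`. -/
noncomputable def proj {d : Type*} [Fintype d] [DecidableEq d] {m : ℕ}
    (S : Fin m → Matrix d d ℂ) (x : Fin m → ZMod 2) : Matrix d d ℂ :=
  (List.ofFn fun i => (2 : ℂ)⁻¹ • ((1 : Matrix d d ℂ) + ((-1 : ℂ) ^ (x i).val) • S i)).prod

/-- Stabilizer element `S(a) = Π_i S_i^{a_i}`. -/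
noncomputable def Spow {d : Type*} [Fintype d] [DecidableEq d] {m : ℕ}
    (S : Fin m → Matrix d d ℂ) (a : Fin m → ZMod 2) : Matrix d d ℂ :=
  (List.ofFn fun i => S i ^ (a i).val).prod

/-- `f_a(x) = E(a|ρ_x) p̃(x|ρ)`, the unnormalized post-measurement expectation. -/
noncomputable def fA {d ι : Type*} [Fintype d] [DecidableEq d] [Fintype ι] {m : ℕ}
    (S : Fin m → Matrix d d ℂ) (E : ι → Matrix d d ℂ)
    (P : ι × (Fin m → ZMod 2) → ℝ) (ρ : Matrix d d ℂ)
    (a x : Fin m → ZMod 2) : ℂ :=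
  ∑ p : ι × (Fin m → ZMod 2), (P p : ℂ) *
    (Spow S a * (E p.1 * proj S (x + p.2) * ρ * proj S (x + p.2) * (E p.1)ᴴ)).trace

/-- `g_a(u) = E(a; P_u) P(u) = Σ_e (-1)^{(e,S(a))} P(e,u)`. -/
noncomputable def gA {ι : Type*} [Fintype ι] {m : ℕ}
    (pair : ι → (Fin m → ZMod 2) → ZMod 2)
    (P : ι × (Fin m → ZMod 2) → ℝ) (a u : Fin m → ZMod 2) : ℂ :=
  ∑ e : ι, ((-1 : ℂ) ^ (pair e a).val) * (P (e, u) : ℂ)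

/-- `h_a(b) = E(a+b|ρ)`. -/
noncomputable def hA {d : Type*} [Fintype d] [DecidableEq d] {m : ℕ}
    (S : Fin m → Matrix d d ℂ) (ρ : Matrix d d ℂ) (a b : Fin m → ZMod 2) : ℂ :=
  (Spow S (a + b) * ρ).trace

/-! Write `χ_y(b) = (-1)^(y ⬝ᵥ b)`. The syndrome projector expands as
`π_y = 2^{-m} ∑_b χ_y(b) S(b)`, hence `π_y S(c) = χ_y(c) π_y`, `π_y² = π_y` and
`∑_y χ_y(b) π_y = S(b)`. Since `E_e` commutes or anticommutes with `S(a)`,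
`f_a(x) = ∑_{(e,v)} P(e,v) (-1)^{(e,a)} χ_{x+v}(a) tr(π_{x+v} ρ)`, so the Walsh–Hadamard transform
of `f_a` is `E(a+b|ρ)` times that of `g_a`. Dividing by `E(a+b|ρ) ≠ 0` and summing over
`b ∈ W^⊥`, where `∑_{b ∈ W^⊥} χ_v(b) = 2^{m-k} [v ∈ W]`, gives the coset formula; `b = 0`
gives the second identity. -/

lemma dotp_eq_dotProduct {m : ℕ} (a x : Fin m → ZMod 2) : dotp a x = a ⬝ᵥ x := rfl

noncomputable def signChar : AddChar (ZMod 2) ℂ where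
  toFun s := (-1) ^ s.val
  map_zero_eq_one' := by simp
  map_add_eq_mul' s t := by
    rw [← pow_add, ZMod.val_add, ← neg_one_pow_eq_pow_mod_two]

lemma signChar_apply (s : ZMod 2) : signChar s = (-1) ^ s.val := rfl

lemma signChar_eq_one_iff {s : ZMod 2} : signChar s = 1 ↔ s = 0 := by
  obtain rfl | rfl : s = 0 ∨ s = 1 := by revert s; decide
  all_goals norm_num [signChar_apply, ZMod.val_one]

lemma signChar_mul_self (s : ZMod 2) : signChar s * signChar s = 1 := by
  rw [← AddChar.map_add_eq_mul, ZModModule.add_self, AddChar.map_zero_eq_one]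

lemma sum_signChar_comp_eq_zero {G : Type*} [AddGroup G] [Fintype G] {φ : G →+ ZMod 2}
    (hφ : φ ≠ 0) : ∑ g, signChar (φ g) = 0 := by
  classical
  have hψ : signChar.compAddMonoidHom φ ≠ 0 := by
    contrapose! hφ
    ext g
    simpa [signChar_eq_one_iff] using AddChar.eq_zero_iff.mp hφ g
  simpa [hψ] using AddChar.sum_eq_ite (signChar.compAddMonoidHom φ)

lemma dotProductBilin_isRefl {K n : Type*} [CommSemiring K] [Fintype n] :
    (dotProductBilin K K : LinearMap.BilinForm K (n → K)).IsRefl :=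
  fun x y h => by simpa [dotProduct_comm] using h

lemma dotProductBilin_nondegenerate {K n : Type*} [CommRing K] [Fintype n] [DecidableEq n] :
    (dotProductBilin K K : LinearMap.BilinForm K (n → K)).Nondegenerate :=
  dotProductBilin_isRefl.nondegenerate_iff_separatingLeft.mpr fun x hx => by
    ext i
    simpa using hx (Pi.single i 1)

section DotProduct

variable {m : ℕ}

lemma sum_signChar_dotProduct (v : Fin m → ZMod 2) :
    ∑ x : Fin m → ZMod 2, signChar (x ⬝ᵥ v) = if v = 0 then 2 ^ m else 0 := by
  split_ifs with hv
  · simp [hv]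
  · refine sum_signChar_comp_eq_zero (φ := AddMonoidHom.mk' (· ⬝ᵥ v) (add_dotProduct · · v)) ?_
    contrapose! hv
    ext i
    simpa using DFunLike.congr_fun hv (Pi.single i 1)

lemma sum_signChar_dotProduct_orthogonal (W : Submodule (ZMod 2) (Fin m → ZMod 2))
    [DecidablePred (· ∈ W)] {k : ℕ} (hk : Module.finrank (ZMod 2) W = k) (v : Fin m → ZMod 2) :
    ∑ b ∈ univ.filter (fun b => ∀ w ∈ W, b ⬝ᵥ w = 0), signChar (v ⬝ᵥ b)
      = if v ∈ W then 2 ^ (m - k) else 0 := by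
  classical
  set B : LinearMap.BilinForm (ZMod 2) (Fin m → ZMod 2) := dotProductBilin (ZMod 2) (ZMod 2)
  have hB₀ : B.IsRefl := dotProductBilin_isRefl
  have hB : B.Nondegenerate := dotProductBilin_nondegenerate
  have hmem : ∀ b, b ∈ B.orthogonal W ↔ ∀ w ∈ W, b ⬝ᵥ w = 0 := fun b => by
    simp [B, LinearMap.BilinForm.mem_orthogonal_iff, dotProduct_comm]
  rw [Finset.sum_subtype (p := (· ∈ B.orthogonal W)) (F := inferInstance) _
    fun b => by simp [hmem]]
  split_ifs with hv
  · have hcard : Fintype.card (B.orthogonal W) = 2 ^ (m - k) := by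
      rw [Module.card_eq_pow_finrank (K := ZMod 2), ZMod.card,
        LinearMap.BilinForm.finrank_orthogonal hB, Module.finrank_fin_fun, hk]
    have hW : v ∈ B.orthogonal (B.orthogonal W) := by
      rwa [LinearMap.BilinForm.orthogonal_orthogonal hB hB₀]
    have hterm (b : B.orthogonal W) : signChar (v ⬝ᵥ b) = 1 := by
      rw [dotProduct_comm, show (b : Fin m → ZMod 2) ⬝ᵥ v = 0 from hW b b.2,
        AddChar.map_zero_eq_one]
    rw [Finset.sum_congr rfl fun b _ => hterm b, Finset.sum_const, Finset.card_univ, hcard]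
    simp
  · refine sum_signChar_comp_eq_zero
      (φ := (B v).toAddMonoidHom.comp (B.orthogonal W).subtype.toAddMonoidHom) ?_
    contrapose! hv
    rw [← LinearMap.BilinForm.orthogonal_orthogonal hB hB₀ W]
    intro b hb
    simpa [B, dotProduct_comm] using DFunLike.congr_fun hv ⟨b, hb⟩

lemma sum_orthogonal_sum_signChar_mul (W : Submodule (ZMod 2) (Fin m → ZMod 2))
    [DecidablePred (· ∈ W)] {k : ℕ} (hk : Module.finrank (ZMod 2) W = k) (u : Fin m → ZMod 2)
    (g : (Fin m → ZMod 2) → ℂ) :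
    ∑ b ∈ univ.filter (fun b => ∀ w ∈ W, b ⬝ᵥ w = 0), ∑ v, signChar ((u + v) ⬝ᵥ b) * g v
      = 2 ^ (m - k) * ∑ w ∈ univ.filter (· ∈ W), g (u + w) := by
  rw [Finset.sum_comm, Finset.sum_filter, ← Equiv.sum_comp (Equiv.addLeft u), Finset.mul_sum]
  refine Finset.sum_congr rfl fun v _ => ?_
  rw [← Finset.sum_mul, sum_signChar_dotProduct_orthogonal W hk, Equiv.coe_addLeft, ← add_assoc,
    ZModModule.add_self, zero_add]
  split_ifs <;> simp

end DotProduct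

section Stabilizer

variable {d : Type*} [Fintype d] [DecidableEq d]

lemma Spow_succ {m : ℕ} (S : Fin (m + 1) → Matrix d d ℂ) (x : Fin (m + 1) → ZMod 2) :
    Spow S x = S 0 ^ (x 0).val * Spow (Fin.tail S) (Fin.tail x) := by
  rw [Spow, List.ofFn_succ, List.prod_cons]
  rfl

lemma commute_Spow {m : ℕ} (S : Fin m → Matrix d d ℂ) {A : Matrix d d ℂ}
    (hA : ∀ i, Commute A (S i)) (x : Fin m → ZMod 2) : Commute A (Spow S x) :=
  Commute.list_prod_right _ _ fun _ hy => by
    obtain ⟨i, rfl⟩ := List.mem_ofFn.mp hy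
    exact (hA i).pow_right _

lemma pow_val_add_of_mul_self_eq_one {M : Type*} [Monoid M] {A : M} (hA : A * A = 1)
    (s t : ZMod 2) :
    A ^ (s + t).val = A ^ s.val * A ^ t.val := by
  rw [← pow_add, ZMod.val_add, ← pow_eq_pow_mod _ (by rwa [sq])]

lemma Spow_add {m : ℕ} (S : Fin m → Matrix d d ℂ) (hcomm : ∀ i j, Commute (S i) (S j))
    (hinv : ∀ i, S i * S i = 1) (x y : Fin m → ZMod 2) :
    Spow S (x + y) = Spow S x * Spow S y := by
  induction m with
  | zero => simp [Spow]
  | succ m ih =>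
    have hc : Commute (S 0 ^ (y 0).val) (Spow (Fin.tail S) (Fin.tail x)) :=
      commute_Spow _ (fun i => (hcomm 0 i.succ).pow_left _) _
    rw [Spow_succ, Spow_succ S x, Spow_succ S y, Pi.add_apply,
      pow_val_add_of_mul_self_eq_one (hinv 0),
      show Fin.tail (x + y) = Fin.tail x + Fin.tail y from rfl,
      ih (Fin.tail S) (fun i j => hcomm i.succ j.succ) (fun i => hinv i.succ), mul_assoc,
      mul_assoc, ← mul_assoc (S 0 ^ (y 0).val), hc.eq, mul_assoc]

lemma proj_succ {m : ℕ} (S : Fin (m + 1) → Matrix d d ℂ) (y : Fin (m + 1) → ZMod 2) :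
    proj S y = (2 : ℂ)⁻¹ • (1 + signChar (y 0) • S 0) * proj (Fin.tail S) (Fin.tail y) := by
  rw [proj, List.ofFn_succ, List.prod_cons]
  rfl

lemma proj_eq_sum {m : ℕ} (S : Fin m → Matrix d d ℂ) (y : Fin m → ZMod 2) :
    proj S y = (2 : ℂ)⁻¹ ^ m • ∑ b, signChar (y ⬝ᵥ b) • Spow S b := by
  induction m with
  | zero => simp [proj, Spow]
  | succ m ih =>
    have hsum :
        ∑ b₀ : ZMod 2, signChar (y 0 * b₀) • S 0 ^ b₀.val = 1 + signChar (y 0) • S 0 := by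
      rw [show (univ : Finset (ZMod 2)) = {0, 1} by decide, sum_pair (by decide)]
      simp [ZMod.val_one]
    rw [proj_succ, ih, ← (Fin.consEquiv fun _ => ZMod 2).sum_comp, Fintype.sum_prod_type]
    have hdot (b₀ : ZMod 2) (b : Fin m → ZMod 2) :
        y ⬝ᵥ Fin.cons b₀ b = y 0 * b₀ + Fin.tail y ⬝ᵥ b :=
      dotProduct_cons y b₀ b
    simp only [Fin.consEquiv, Equiv.coe_fn_mk, Spow_succ, Fin.cons_zero, Fin.tail_cons, hdot,
      AddChar.map_add_eq_mul, ← smul_mul_smul_comm, ← Finset.sum_mul_sum, hsum]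
    rw [smul_mul_smul_comm, pow_succ']

variable {m : ℕ} {S : Fin m → Matrix d d ℂ}

lemma proj_mul_Spow (hS : ∀ x y, Spow S (x + y) = Spow S x * Spow S y) (y c : Fin m → ZMod 2) :
    proj S y * Spow S c = signChar (y ⬝ᵥ c) • proj S y := by
  simp only [proj_eq_sum S y, Finset.smul_sum, Finset.sum_mul, smul_mul_assoc, ← hS, smul_smul]
  refine Fintype.sum_equiv (Equiv.addRight c) _ _ fun b => ?_
  rw [Equiv.coe_addRight, dotProduct_add, AddChar.map_add_eq_mul]
  congr 1
  linear_combination (2⁻¹ ^ m * signChar (y ⬝ᵥ b)) * (signChar_mul_self (y ⬝ᵥ c)).symm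

lemma proj_mul_self (hS : ∀ x y, Spow S (x + y) = Spow S x * Spow S y) (y : Fin m → ZMod 2) :
    proj S y * proj S y = proj S y := by
  nth_rewrite 2 [proj_eq_sum S y]
  simp only [mul_smul_comm, Finset.mul_sum, proj_mul_Spow hS, smul_smul, signChar_mul_self,
    one_smul, Finset.sum_const, Finset.card_univ, ← Nat.cast_smul_eq_nsmul ℂ]
  simp

lemma sum_signChar_smul_proj (b : Fin m → ZMod 2) :
    ∑ y, signChar (y ⬝ᵥ b) • proj S y = Spow S b := by
  simp only [proj_eq_sum S, Finset.smul_sum, smul_smul]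
  have hcoef (c : Fin m → ZMod 2) :
      ∑ y : Fin m → ZMod 2, signChar (y ⬝ᵥ b) * (2⁻¹ ^ m * signChar (y ⬝ᵥ c))
        = if b = c then 1 else 0 := by
    simp_rw [mul_left_comm _ ((2 : ℂ)⁻¹ ^ m), ← AddChar.map_add_eq_mul, ← dotProduct_add,
      ← Finset.mul_sum, sum_signChar_dotProduct, add_eq_zero_iff_eq_neg, ZModModule.neg_eq_self]
    split_ifs <;> simp
  rw [Finset.sum_comm]
  simp only [← Finset.sum_smul, hcoef, ite_smul, one_smul, zero_smul, Finset.sum_ite_eq,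
    Finset.mem_univ, if_true]

lemma trace_mul_conj_of_mul_mul_eq_smul {n R : Type*} [Fintype n] [CommSemiring R]
    {A E F : Matrix n n R} {ε : R} (h : F * A * E = ε • A) (X : Matrix n n R) :
    (A * (E * X * F)).trace = ε * (A * X).trace := by
  rw [show A * (E * X * F) = A * E * X * F by simp only [mul_assoc], trace_mul_comm, ← mul_assoc,
    ← mul_assoc, h, smul_mul_assoc, trace_smul, smul_eq_mul]

lemma trace_Spow_mul_proj_mul_proj (hS : ∀ x y, Spow S (x + y) = Spow S x * Spow S y)
    (ρ : Matrix d d ℂ) (a y : Fin m → ZMod 2) :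
    (Spow S a * (proj S y * ρ * proj S y)).trace = signChar (y ⬝ᵥ a) * (proj S y * ρ).trace := by
  rw [show Spow S a * (proj S y * ρ * proj S y) = Spow S a * proj S y * ρ * proj S y by
    simp only [mul_assoc], trace_mul_comm, ← mul_assoc, ← mul_assoc]
  simp only [proj_mul_Spow hS, smul_mul_assoc, proj_mul_self hS, trace_smul, smul_eq_mul]

lemma sum_signChar_mul_trace_proj (ρ : Matrix d d ℂ) (c : Fin m → ZMod 2) :
    ∑ y, signChar (y ⬝ᵥ c) * (proj S y * ρ).trace = (Spow S c * ρ).trace := by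
  simp only [← sum_signChar_smul_proj c, Finset.sum_mul, trace_sum, smul_mul_assoc, trace_smul,
    smul_eq_mul]

lemma sum_signChar_mul_trace_Spow_proj (hS : ∀ x y, Spow S (x + y) = Spow S x * Spow S y)
    (ρ : Matrix d d ℂ) (a u v b : Fin m → ZMod 2) :
    ∑ x, signChar ((u + x) ⬝ᵥ b) * (Spow S a * (proj S (x + v) * ρ * proj S (x + v))).trace
      = signChar ((u + v) ⬝ᵥ b) * hA S ρ a b := by
  rw [← Equiv.sum_comp (Equiv.addRight v)]
  simp only [Equiv.coe_addRight, add_assoc, ZModModule.add_self, add_zero,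
    trace_Spow_mul_proj_mul_proj hS]
  have hterm (y : Fin m → ZMod 2) :
      signChar ((u + (y + v)) ⬝ᵥ b) * (signChar (y ⬝ᵥ a) * (proj S y * ρ).trace)
        = signChar ((u + v) ⬝ᵥ b) * (signChar (y ⬝ᵥ (a + b)) * (proj S y * ρ).trace) := by
    rw [add_left_comm, add_comm u, add_dotProduct, dotProduct_add, AddChar.map_add_eq_mul,
      AddChar.map_add_eq_mul]
    ring
  rw [Finset.sum_congr rfl fun y _ => hterm y, ← Finset.mul_sum, sum_signChar_mul_trace_proj, hA]

lemma sum_signChar_mul_fA (hS : ∀ x y, Spow S (x + y) = Spow S x * Spow S y)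
    {ι : Type*} [Fintype ι] (E : ι → Matrix d d ℂ) (pair : ι → (Fin m → ZMod 2) → ZMod 2)
    (P : ι × (Fin m → ZMod 2) → ℝ) (ρ : Matrix d d ℂ) (a : Fin m → ZMod 2)
    (hconj : ∀ e, (E e)ᴴ * Spow S a * E e = signChar (pair e a) • Spow S a)
    (u b : Fin m → ZMod 2) :
    ∑ x, signChar ((u + x) ⬝ᵥ b) * fA S E P ρ a x
      = hA S ρ a b * ∑ v, signChar ((u + v) ⬝ᵥ b) * gA pair P a v := by
  have hfA (x : Fin m → ZMod 2) : fA S E P ρ a x = ∑ p, P p * signChar (pair p.1 a) *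
      (Spow S a * (proj S (x + p.2) * ρ * proj S (x + p.2))).trace := by
    refine Finset.sum_congr rfl fun p _ => ?_
    rw [mul_assoc (P p : ℂ), ← trace_mul_conj_of_mul_mul_eq_smul (hconj p.1)]
    simp only [mul_assoc]
  calc ∑ x, signChar ((u + x) ⬝ᵥ b) * fA S E P ρ a x
      = ∑ p : ι × (Fin m → ZMod 2), P p * signChar (pair p.1 a) *
          ∑ x, signChar ((u + x) ⬝ᵥ b) *
            (Spow S a * (proj S (x + p.2) * ρ * proj S (x + p.2))).trace := by
        simp only [hfA, Finset.mul_sum]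
        rw [Finset.sum_comm]
        exact Finset.sum_congr rfl fun p _ => Finset.sum_congr rfl fun x _ => by ring
    _ = hA S ρ a b * ∑ v, signChar ((u + v) ⬝ᵥ b) * gA pair P a v := by
        simp only [sum_signChar_mul_trace_Spow_proj hS, gA, ← signChar_apply, Finset.mul_sum,
          Fintype.sum_prod_type]
        rw [Finset.sum_comm]
        exact Finset.sum_congr rfl fun v _ => Finset.sum_congr rfl fun e _ => by ring

end Stabilizer

theorem calibration_coset_general {d ι : Type*} [Fintype d] [DecidableEq d] [Fintype ι] {m : ℕ}
    (S : Fin m → Matrix d d ℂ)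
    (hcomm : ∀ i j, S i * S j = S j * S i)
    (hinv : ∀ i, S i * S i = 1)
    (E : ι → Matrix d d ℂ)
    (pair : ι → (Fin m → ZMod 2) → ZMod 2)
    (hconj : ∀ (e : ι) (b : Fin m → ZMod 2),
      (E e)ᴴ * Spow S b * E e = ((-1 : ℂ) ^ (pair e b).val) • Spow S b)
    (P : ι × (Fin m → ZMod 2) → ℝ)
    (ρ : Matrix d d ℂ) (a : Fin m → ZMod 2)
    (hh : ∀ b, hA S ρ a b ≠ 0)
    (W : Submodule (ZMod 2) (Fin m → ZMod 2)) [DecidablePred (· ∈ W)] (k : ℕ)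
    (hk : Module.finrank (ZMod 2) W = k)
    (u : Fin m → ZMod 2) :
    (∑ w ∈ Finset.univ.filter (· ∈ W), gA pair P a (u + w)
      = ((2 : ℂ) ^ k / (2 : ℂ) ^ m) *
          ∑ b ∈ Finset.univ.filter (fun b => ∀ w ∈ W, dotp b w = 0),
            ∑ x : Fin m → ZMod 2,
              ((-1 : ℂ) ^ (dotp (u + x) b).val) * fA S E P ρ a x / hA S ρ a b) ∧
    (∑ v : Fin m → ZMod 2, gA pair P a v
      = (∑ x : Fin m → ZMod 2, fA S E P ρ a x) / hA S ρ a 0) := by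
  have hF := sum_signChar_mul_fA (Spow_add S hcomm hinv) E pair P ρ a (fun e => hconj e a)
  have hkm : k ≤ m := by simpa [hk] using W.finrank_le
  -- `simp` cannot rewrite `dotp` inside the filter's `Decidable` instance, but `dotp` is `⬝ᵥ`.
  rw [show univ.filter (fun b => ∀ w ∈ W, dotp b w = 0)
    = univ.filter (fun b => ∀ w ∈ W, b ⬝ᵥ w = 0) from rfl]
  simp only [dotp_eq_dotProduct, ← signChar_apply]
  constructor
  · have hb (b : Fin m → ZMod 2) :
        ∑ x, signChar ((u + x) ⬝ᵥ b) * fA S E P ρ a x / hA S ρ a b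
          = ∑ v, signChar ((u + v) ⬝ᵥ b) * gA pair P a v := by
      rw [← Finset.sum_div, hF, mul_div_cancel_left₀ _ (hh b)]
    rw [Finset.sum_congr rfl fun b _ => hb b, sum_orthogonal_sum_signChar_mul W hk, ← mul_assoc,
      div_mul_eq_mul_div, ← pow_add, Nat.add_sub_cancel' hkm,
      div_self (pow_ne_zero _ two_ne_zero), one_mul]
  · have h0 := hF 0 0
    simp only [zero_add, dotProduct_zero, AddChar.map_zero_eq_one, one_mul] at h0
    rw [h0, mul_div_cancel_left₀ _ (hh 0)]

/-- Coset-averaged calibration: for a `k`-dimensional subspace `W ⊆ F_2^m`, the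
coset-aggregated quantity `E(a;P_{[u]})P([u]) = Σ_{w∈W} g_a(u+w)` equals
`2^{k-m} Σ_{b∈W^⊥} Σ_x (-1)^{(u+x)·b} f_a(x)/h_a(b)` (the sum over cosets `[x]` of the
coset-aggregated `f_a` being rewritten as a sum over all `x`); in particular for
`W = F_2^m` one gets `E(a;P_{F_2^m}) = (Σ_x f_a(x)) / E(a|ρ)`. -/
theorem calibration_coset {d ι : Type*} [Fintype d] [DecidableEq d] [Fintype ι] {m : ℕ}
    (S : Fin m → Matrix d d ℂ)
    (hcomm : ∀ i j, S i * S j = S j * S i)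
    (hinv : ∀ i, S i * S i = 1)
    (E : ι → Matrix d d ℂ)
    (pair : ι → (Fin m → ZMod 2) → ZMod 2)
    (hconj : ∀ (e : ι) (b : Fin m → ZMod 2),
      (E e)ᴴ * Spow S b * E e = ((-1 : ℂ) ^ (pair e b).val) • Spow S b)
    (P : ι × (Fin m → ZMod 2) → ℝ) (hPnn : ∀ p, 0 ≤ P p) (hPsum : ∑ p, P p = 1)
    (ρ : Matrix d d ℂ) (a : Fin m → ZMod 2)
    (hh : ∀ b, hA S ρ a b ≠ 0)
    (W : Submodule (ZMod 2) (Fin m → ZMod 2)) [DecidablePred (· ∈ W)] (k : ℕ)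
    (hk : Module.finrank (ZMod 2) W = k)
    (u : Fin m → ZMod 2) :
    (∑ w ∈ Finset.univ.filter (· ∈ W), gA pair P a (u + w)
      = ((2 : ℂ) ^ k / (2 : ℂ) ^ m) *
          ∑ b ∈ Finset.univ.filter (fun b => ∀ w ∈ W, dotp b w = 0),
            ∑ x : Fin m → ZMod 2,
              ((-1 : ℂ) ^ (dotp (u + x) b).val) * fA S E P ρ a x / hA S ρ a b) ∧
    (∑ v : Fin m → ZMod 2, gA pair P a v
      = (∑ x : Fin m → ZMod 2, fA S E P ρ a x) / hA S ρ a 0) :=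
  calibration_coset_general S hcomm hinv E pair hconj P ρ a hh W k hk u
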